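/- Let Θ be a measurable space, q a probability measure on Θ, m : Θ → ℝ measurable and square-integrable with respect to q, v > 0, and fix θ* ∈ Θ with m* := m(θ*). For each θ let p_θ denote the density of N(m(θ), v²) with respect to Lebesgue measure on ℝ, and set p^q(y) := ∫_Θ p_θ(y) dq(θ). Then KL(p_{θ*}‖p^q) + ∫_Θ KL(p_θ‖p^q) dq(θ) ≤ (1/v²) ∫_Θ (m(θ) − m*)² dq(θ) = 2 ∫_Θ KL(p_{θ*}‖p_θ) dq(θ). That is, for the Gaussian likelihood, the prediction excess risk plus the Bayesian excess risk (mutual information) for the log loss is at most twice the excess risk ER^log. (Specialization of Theorem 3 to the Gaussian likelihood, Appendix Eq. (eq_gaussian_trans), conditional version.) -/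

import Mathlib

open MeasureTheory

/-- The density of the Gaussian distribution `N(a, v²)` with respect to
Lebesgue measure on `ℝ`. -/
noncomputable def gaussPdf (a v y : ℝ) : ℝ :=
  (Real.sqrt (2 * Real.pi * v ^ 2))⁻¹ * Real.exp (-(y - a) ^ 2 / (2 * v ^ 2))

open Real Filter


lemma tendsto_neg_half_mul_atTop : Tendsto (fun x : ℝ => Real.exp (-(1/2) * x)) atTop (nhds 0) := by
  apply Real.tendsto_exp_atBot.comp
  show Tendsto (fun x : ℝ => -(1/2) * x) atTop atBot
  have heq : (fun x : ℝ => -(1/2) * x) = fun x : ℝ => -((1/2) * x) := by funext x; ring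
  rw [heq, tendsto_neg_atBot_iff]
  exact (tendsto_id (α := ℝ)).const_mul_atTop (by norm_num)

lemma tendsto_mul_exp_neg_mul_sq_atTop {b : ℝ} (hb : 0 < b) :
    Tendsto (fun x : ℝ => x * Real.exp (-b * x ^ 2)) atTop (nhds 0) := by
  have h := rpow_mul_exp_neg_mul_sq_isLittleO_exp_neg hb 1
  have h2 : (fun x : ℝ => x * Real.exp (-b * x ^ 2)) =ᶠ[atTop]
      (fun x : ℝ => x ^ (1:ℝ) * Real.exp (-b * x ^ 2)) := by
    filter_upwards [eventually_ge_atTop (0:ℝ)] with x hx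
    rw [Real.rpow_one]
  exact Tendsto.congr' h2.symm (h.tendsto_zero_of_tendsto tendsto_neg_half_mul_atTop)

lemma tendsto_mul_exp_neg_mul_sq_atBot {b : ℝ} (hb : 0 < b) :
    Tendsto (fun x : ℝ => x * Real.exp (-b * x ^ 2)) atBot (nhds 0) := by
  have h := (tendsto_mul_exp_neg_mul_sq_atTop hb).comp tendsto_neg_atBot_atTop
  have heq : ((fun x : ℝ => x * Real.exp (-b * x ^ 2)) ∘ Neg.neg) =
      fun x : ℝ => -(x * Real.exp (-b * x ^ 2)) := by
    funext x; simp only [Function.comp_apply, neg_sq]; ring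
  rw [heq] at h
  simpa using h.neg

lemma tendsto_exp_neg_mul_sq_atTop {b : ℝ} (hb : 0 < b) :
    Tendsto (fun x : ℝ => Real.exp (-b * x ^ 2)) atTop (nhds 0) := by
  apply Real.tendsto_exp_atBot.comp
  simp only [neg_mul]
  rw [tendsto_neg_atBot_iff]
  exact (tendsto_pow_atTop two_ne_zero).const_mul_atTop hb

lemma tendsto_exp_neg_mul_sq_atBot {b : ℝ} (hb : 0 < b) :
    Tendsto (fun x : ℝ => Real.exp (-b * x ^ 2)) atBot (nhds 0) := by
  have h := (tendsto_exp_neg_mul_sq_atTop hb).comp tendsto_neg_atBot_atTop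
  have heq : ((fun x : ℝ => Real.exp (-b * x ^ 2)) ∘ Neg.neg) =
      fun x : ℝ => Real.exp (-b * x ^ 2) := by
    funext x; simp only [Function.comp_apply, neg_sq]
  rwa [heq] at h

lemma integrable_sq_mul_exp_neg_mul_sq {b : ℝ} (hb : 0 < b) :
    Integrable (fun x : ℝ => x ^ 2 * Real.exp (-b * x ^ 2)) := by
  have h := integrable_rpow_mul_exp_neg_mul_sq hb (s := 2) (by norm_num)
  refine h.congr (Filter.Eventually.of_forall fun x => ?_)
  simp only [Real.rpow_two]

lemma hasDerivAt_exp_neg_mul_sq (b x : ℝ) :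
    HasDerivAt (fun x : ℝ => Real.exp (-b * x ^ 2)) (-b * (2 * x) * Real.exp (-b * x ^ 2)) x := by
  have h1 : HasDerivAt (fun x : ℝ => -b * x ^ 2) (-b * (2 * x)) x := by
    simpa [mul_comm] using ((hasDerivAt_pow 2 x).const_mul (-b))
  simpa [mul_comm] using h1.exp

lemma integral_mul_exp_neg_mul_sq' {b : ℝ} (hb : 0 < b) :
    ∫ x : ℝ, x * Real.exp (-b * x ^ 2) = 0 := by
  have hderiv : ∀ x : ℝ, HasDerivAt (fun x : ℝ => -(2*b)⁻¹ * Real.exp (-b * x ^ 2))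
      (x * Real.exp (-b * x ^ 2)) x := by
    intro x
    have := (hasDerivAt_exp_neg_mul_sq b x).const_mul (-(2*b)⁻¹)
    exact this.congr_deriv (by linear_combination (x * Real.exp (-b * x ^ 2)) * mul_inv_cancel₀ hb.ne')
  have h := integral_of_hasDerivAt_of_tendsto hderiv (integrable_mul_exp_neg_mul_sq hb)
    (by simpa using (tendsto_exp_neg_mul_sq_atBot hb).const_mul (-(2*b)⁻¹))
    (by simpa using (tendsto_exp_neg_mul_sq_atTop hb).const_mul (-(2*b)⁻¹))
  simpa using h

lemma integral_sq_mul_exp_neg_mul_sq {b : ℝ} (hb : 0 < b) :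
    ∫ x : ℝ, x ^ 2 * Real.exp (-b * x ^ 2) = Real.sqrt (Real.pi / b) / (2 * b) := by
  have hb2 : (2 * b) ≠ 0 := by positivity
  have hderiv : ∀ x : ℝ, HasDerivAt (fun x : ℝ => -(2*b)⁻¹ * (x * Real.exp (-b * x ^ 2)))
      (x ^ 2 * Real.exp (-b * x ^ 2) - (2*b)⁻¹ * Real.exp (-b * x ^ 2)) x := by
    intro x
    have h1 : HasDerivAt (fun x : ℝ => x * Real.exp (-b * x ^ 2))
        (1 * Real.exp (-b * x ^ 2) + x * (-b * (2 * x) * Real.exp (-b * x ^ 2))) x :=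
      (hasDerivAt_id x).mul (hasDerivAt_exp_neg_mul_sq b x)
    have := h1.const_mul (-(2*b)⁻¹)
    exact this.congr_deriv (by linear_combination (x ^ 2 * Real.exp (-b * x ^ 2)) * mul_inv_cancel₀ hb.ne')
  have hint : Integrable (fun x : ℝ =>
      x ^ 2 * Real.exp (-b * x ^ 2) - (2*b)⁻¹ * Real.exp (-b * x ^ 2)) :=
    (integrable_sq_mul_exp_neg_mul_sq hb).sub ((integrable_exp_neg_mul_sq hb).const_mul _)
  have h := integral_of_hasDerivAt_of_tendsto hderiv hint
    (by simpa using (tendsto_mul_exp_neg_mul_sq_atBot hb).const_mul (-(2*b)⁻¹))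
    (by simpa using (tendsto_mul_exp_neg_mul_sq_atTop hb).const_mul (-(2*b)⁻¹))
  rw [integral_sub (integrable_sq_mul_exp_neg_mul_sq hb)
    ((integrable_exp_neg_mul_sq hb).const_mul _), integral_const_mul,
    integral_gaussian] at h
  simp only [sub_zero] at h
  have : ∫ x : ℝ, x ^ 2 * Real.exp (-b * x ^ 2) = (2*b)⁻¹ * Real.sqrt (Real.pi / b) := by
    linarith
  rw [this]; ring


section aux
variable {v : ℝ} (hv : 0 < v)

lemma gaussPdf_eq (a y : ℝ) :
    gaussPdf a v y = (Real.sqrt (2 * Real.pi * v ^ 2))⁻¹ *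
      Real.exp (-(2 * v ^ 2)⁻¹ * (y - a) ^ 2) := by
  unfold gaussPdf
  congr 1
  congr 1
  field_simp

include hv

lemma c_pos : 0 < (Real.sqrt (2 * Real.pi * v ^ 2))⁻¹ := by
  have : 0 < 2 * Real.pi * v ^ 2 := by positivity
  positivity

lemma b_pos : 0 < (2 * v ^ 2)⁻¹ := by positivity

lemma cb_eq : (Real.sqrt (2 * Real.pi * v ^ 2))⁻¹ * Real.sqrt (Real.pi / (2 * v ^ 2)⁻¹) = 1 := by
  have h1 : Real.pi / (2 * v ^ 2)⁻¹ = 2 * Real.pi * v ^ 2 := by field_simp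
  rw [h1]
  have : Real.sqrt (2 * Real.pi * v ^ 2) ≠ 0 := by
    have : 0 < 2 * Real.pi * v ^ 2 := by positivity
    positivity
  exact inv_mul_cancel₀ this

lemma gaussPdf_pos (a y : ℝ) : 0 < gaussPdf a v y :=
  mul_pos (c_pos hv) (Real.exp_pos _)

lemma gaussPdf_le (a y : ℝ) : gaussPdf a v y ≤ (Real.sqrt (2 * Real.pi * v ^ 2))⁻¹ := by
  rw [gaussPdf]
  refine mul_le_of_le_one_right (le_of_lt (c_pos hv)) ?_
  rw [Real.exp_le_one_iff]
  have : (0:ℝ) ≤ (y - a)^2 := sq_nonneg _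
  have h2 : (0:ℝ) < 2 * v ^ 2 := by positivity
  exact div_nonpos_iff.mpr (Or.inr ⟨by linarith, le_of_lt h2⟩)

lemma log_gaussPdf (a y : ℝ) :
    Real.log (gaussPdf a v y) =
      Real.log (Real.sqrt (2 * Real.pi * v ^ 2))⁻¹ - (y - a) ^ 2 / (2 * v ^ 2) := by
  rw [gaussPdf, Real.log_mul (ne_of_gt (c_pos hv)) (Real.exp_ne_zero _), Real.log_exp]
  ring

lemma integrable_gaussPdf (a : ℝ) : Integrable (gaussPdf a v) := by
  have heq : gaussPdf a v = (fun x : ℝ => (Real.sqrt (2 * Real.pi * v ^ 2))⁻¹ *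
      Real.exp (-(2 * v ^ 2)⁻¹ * x ^ 2)) ∘ (fun y => y - a) := by
    funext y; rw [gaussPdf_eq]; rfl
  rw [heq]
  exact Integrable.comp_sub_right ((integrable_exp_neg_mul_sq (b_pos hv)).const_mul _) a

lemma integral_gaussPdf (a : ℝ) : ∫ y : ℝ, gaussPdf a v y = 1 := by
  have heq : (fun y : ℝ => gaussPdf a v y) = fun y : ℝ =>
      (fun x : ℝ => (Real.sqrt (2 * Real.pi * v ^ 2))⁻¹ *
        Real.exp (-(2 * v ^ 2)⁻¹ * x ^ 2)) (y - a) := by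
    funext y; rw [gaussPdf_eq]
  rw [heq, integral_sub_right_eq_self (μ := volume)
    (fun x : ℝ => (Real.sqrt (2 * Real.pi * v ^ 2))⁻¹ * Real.exp (-(2 * v ^ 2)⁻¹ * x ^ 2)) a,
    integral_const_mul, integral_gaussian]
  exact cb_eq hv

lemma integrable_gaussPdf_sq (a d : ℝ) :
    Integrable (fun y : ℝ => gaussPdf a v y * (y - d) ^ 2) := by
  have heq : (fun y : ℝ => gaussPdf a v y * (y - d) ^ 2) =
      (fun x : ℝ => (Real.sqrt (2 * Real.pi * v ^ 2))⁻¹ * (x ^ 2 * Real.exp (-(2 * v ^ 2)⁻¹ * x ^ 2))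
        + (2 * (a - d) * (Real.sqrt (2 * Real.pi * v ^ 2))⁻¹) * (x * Real.exp (-(2 * v ^ 2)⁻¹ * x ^ 2))
        + ((a - d) ^ 2 * (Real.sqrt (2 * Real.pi * v ^ 2))⁻¹) * Real.exp (-(2 * v ^ 2)⁻¹ * x ^ 2))
        ∘ (fun y => y - a) := by
    funext y
    simp only [Function.comp_apply, gaussPdf_eq]
    ring
  rw [heq]
  exact Integrable.comp_sub_right (μ := volume) ((((integrable_sq_mul_exp_neg_mul_sq (b_pos hv)).const_mul _).add
    ((integrable_mul_exp_neg_mul_sq (b_pos hv)).const_mul _)).add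
    ((integrable_exp_neg_mul_sq (b_pos hv)).const_mul _)) a

lemma integral_gaussPdf_sq (a d : ℝ) :
    ∫ y : ℝ, gaussPdf a v y * (y - d) ^ 2 = v ^ 2 + (a - d) ^ 2 := by
  have heq : (fun y : ℝ => gaussPdf a v y * (y - d) ^ 2) = fun y : ℝ =>
      (fun x : ℝ => (Real.sqrt (2 * Real.pi * v ^ 2))⁻¹ * (x ^ 2 * Real.exp (-(2 * v ^ 2)⁻¹ * x ^ 2))
        + (2 * (a - d) * (Real.sqrt (2 * Real.pi * v ^ 2))⁻¹) * (x * Real.exp (-(2 * v ^ 2)⁻¹ * x ^ 2))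
        + ((a - d) ^ 2 * (Real.sqrt (2 * Real.pi * v ^ 2))⁻¹) * Real.exp (-(2 * v ^ 2)⁻¹ * x ^ 2))
        (y - a) := by
    funext y
    rw [gaussPdf_eq]
    ring
  have hA : Integrable (fun x : ℝ => (Real.sqrt (2 * Real.pi * v ^ 2))⁻¹ * (x ^ 2 * Real.exp (-(2 * v ^ 2)⁻¹ * x ^ 2))) volume :=
    (integrable_sq_mul_exp_neg_mul_sq (b_pos hv)).const_mul _
  have hB : Integrable (fun x : ℝ => (2 * (a - d) * (Real.sqrt (2 * Real.pi * v ^ 2))⁻¹) * (x * Real.exp (-(2 * v ^ 2)⁻¹ * x ^ 2))) volume :=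
    (integrable_mul_exp_neg_mul_sq (b_pos hv)).const_mul _
  have hC : Integrable (fun x : ℝ => ((a - d) ^ 2 * (Real.sqrt (2 * Real.pi * v ^ 2))⁻¹) * Real.exp (-(2 * v ^ 2)⁻¹ * x ^ 2)) volume :=
    (integrable_exp_neg_mul_sq (b_pos hv)).const_mul _
  have hAB : Integrable (fun x : ℝ => (Real.sqrt (2 * Real.pi * v ^ 2))⁻¹ * (x ^ 2 * Real.exp (-(2 * v ^ 2)⁻¹ * x ^ 2))
      + (2 * (a - d) * (Real.sqrt (2 * Real.pi * v ^ 2))⁻¹) * (x * Real.exp (-(2 * v ^ 2)⁻¹ * x ^ 2))) volume := hA.add hB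
  rw [heq, integral_sub_right_eq_self (μ := volume)
    (fun x : ℝ => (Real.sqrt (2 * Real.pi * v ^ 2))⁻¹ * (x ^ 2 * Real.exp (-(2 * v ^ 2)⁻¹ * x ^ 2))
        + (2 * (a - d) * (Real.sqrt (2 * Real.pi * v ^ 2))⁻¹) * (x * Real.exp (-(2 * v ^ 2)⁻¹ * x ^ 2))
        + ((a - d) ^ 2 * (Real.sqrt (2 * Real.pi * v ^ 2))⁻¹) * Real.exp (-(2 * v ^ 2)⁻¹ * x ^ 2)) a,
    integral_add hAB hC, integral_add hA hB,
    integral_const_mul, integral_const_mul, integral_const_mul,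
    integral_sq_mul_exp_neg_mul_sq (b_pos hv), integral_mul_exp_neg_mul_sq' (b_pos hv),
    integral_gaussian]
  have hcb := cb_eq hv
  set c := (Real.sqrt (2 * Real.pi * v ^ 2))⁻¹
  set S := Real.sqrt (Real.pi / (2 * v ^ 2)⁻¹)
  have hv2 : (2 * v ^ 2)⁻¹ ≠ 0 := ne_of_gt (b_pos hv)
  field_simp
  nlinarith [sq_nonneg v, hcb]

lemma integrable_gaussPdf_mul_log_gaussPdf (a b' : ℝ) :
    Integrable (fun y : ℝ => gaussPdf a v y * Real.log (gaussPdf b' v y)) := by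
  have heq : (fun y : ℝ => gaussPdf a v y * Real.log (gaussPdf b' v y)) =
      fun y : ℝ => Real.log (Real.sqrt (2 * Real.pi * v ^ 2))⁻¹ * gaussPdf a v y
        - (2 * v ^ 2)⁻¹ * (gaussPdf a v y * (y - b') ^ 2) := by
    funext y
    rw [log_gaussPdf hv]
    field_simp
  rw [heq]
  exact ((integrable_gaussPdf hv a).const_mul _).sub
    ((integrable_gaussPdf_sq hv a b').const_mul _)

lemma integral_gaussPdf_mul_log_gaussPdf (a b' : ℝ) :
    ∫ y : ℝ, gaussPdf a v y * Real.log (gaussPdf b' v y)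
      = Real.log (Real.sqrt (2 * Real.pi * v ^ 2))⁻¹ - (v ^ 2 + (a - b') ^ 2) / (2 * v ^ 2) := by
  have heq : (fun y : ℝ => gaussPdf a v y * Real.log (gaussPdf b' v y)) =
      fun y : ℝ => Real.log (Real.sqrt (2 * Real.pi * v ^ 2))⁻¹ * gaussPdf a v y
        - (2 * v ^ 2)⁻¹ * (gaussPdf a v y * (y - b') ^ 2) := by
    funext y
    rw [log_gaussPdf hv]
    field_simp
  rw [heq, integral_sub ((integrable_gaussPdf hv a).const_mul _)
      ((integrable_gaussPdf_sq hv a b').const_mul _),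
    integral_const_mul, integral_const_mul, integral_gaussPdf hv, integral_gaussPdf_sq hv]
  have hv2 : v ^ 2 ≠ 0 := by positivity
  field_simp

lemma integral_KL (a b' : ℝ) :
    ∫ y : ℝ, gaussPdf a v y * Real.log (gaussPdf a v y / gaussPdf b' v y)
      = (a - b') ^ 2 / (2 * v ^ 2) := by
  have heq : (fun y : ℝ => gaussPdf a v y * Real.log (gaussPdf a v y / gaussPdf b' v y)) =
      fun y : ℝ => gaussPdf a v y * Real.log (gaussPdf a v y)
        - gaussPdf a v y * Real.log (gaussPdf b' v y) := by
    funext y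
    rw [Real.log_div (ne_of_gt (gaussPdf_pos hv a y)) (ne_of_gt (gaussPdf_pos hv b' y))]
    ring
  rw [heq, integral_sub (integrable_gaussPdf_mul_log_gaussPdf hv a a)
      (integrable_gaussPdf_mul_log_gaussPdf hv a b'),
    integral_gaussPdf_mul_log_gaussPdf hv, integral_gaussPdf_mul_log_gaussPdf hv]
  have hv2 : v ^ 2 ≠ 0 := by positivity
  field_simp
  ring

omit hv in
lemma gaussPdf_measurable (a : ℝ) : Measurable (gaussPdf a v) := by
  unfold gaussPdf
  fun_prop

end aux

noncomputable def pq {Θ : Type*} [MeasurableSpace Θ] (q : Measure Θ) (m : Θ → ℝ) (v y : ℝ) : ℝ :=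
  ∫ θ', gaussPdf (m θ') v y ∂q

section main
variable {Θ : Type*} [MeasurableSpace Θ] (q : Measure Θ) [IsProbabilityMeasure q]
  (m : Θ → ℝ) {v : ℝ}

lemma integrable_gauss_theta (hm_meas : Measurable m) (hv : 0 < v) (y : ℝ) :
    Integrable (fun θ' => gaussPdf (m θ') v y) q := by
  refine Integrable.mono' (integrable_const ((Real.sqrt (2 * Real.pi * v ^ 2))⁻¹)) ?_ ?_
  · apply Measurable.aestronglyMeasurable
    unfold gaussPdf
    fun_prop
  · filter_upwards with θ'
    rw [Real.norm_eq_abs, abs_of_pos (gaussPdf_pos hv _ _)]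
    exact gaussPdf_le hv _ _

lemma pq_pos (hm_meas : Measurable m) (hv : 0 < v) (y : ℝ) : 0 < pq q m v y := by
  rw [pq, integral_pos_iff_support_of_nonneg_ae
    (Filter.Eventually.of_forall fun θ' => le_of_lt (gaussPdf_pos hv _ _))
    (integrable_gauss_theta q m hm_meas hv y)]
  have hs : (Function.support fun θ' => gaussPdf (m θ') v y) = Set.univ := by
    ext θ'
    simp only [Function.mem_support, Set.mem_univ, iff_true]
    exact ne_of_gt (gaussPdf_pos hv _ _)
  rw [hs]
  simp

lemma pq_le (hm_meas : Measurable m) (hv : 0 < v) (y : ℝ) :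
    pq q m v y ≤ (Real.sqrt (2 * Real.pi * v ^ 2))⁻¹ := by
  rw [pq]
  calc ∫ θ', gaussPdf (m θ') v y ∂q
      ≤ ∫ _θ', (Real.sqrt (2 * Real.pi * v ^ 2))⁻¹ ∂q := by
        exact integral_mono (integrable_gauss_theta q m hm_meas hv y) (integrable_const _)
          (fun θ' => gaussPdf_le hv _ _)
    _ = (Real.sqrt (2 * Real.pi * v ^ 2))⁻¹ := by simp

lemma stronglyMeasurable_gauss_prod (hm_meas : Measurable m) :
    StronglyMeasurable (fun z : ℝ × Θ => gaussPdf (m z.2) v z.1) := by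
  apply Measurable.stronglyMeasurable
  unfold gaussPdf
  fun_prop

lemma measurable_pq (hm_meas : Measurable m) : Measurable (pq q m v) := by
  have h := (stronglyMeasurable_gauss_prod (v := v) m hm_meas).integral_prod_right' (ν := q)
  exact h.measurable

lemma log_pq_ge (hm_meas : Measurable m) (hm : MemLp m 2 q) (hv : 0 < v) (y : ℝ) :
    Real.log (Real.sqrt (2 * Real.pi * v ^ 2))⁻¹
      - (y ^ 2 - 2 * y * (∫ θ, m θ ∂q) + ∫ θ, (m θ) ^ 2 ∂q) / (2 * v ^ 2)
      ≤ Real.log (pq q m v y) := by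
  have hm1 : Integrable m q := hm.integrable one_le_two
  have hm2 : Integrable (fun θ => (m θ) ^ 2) q := hm.integrable_sq
  have hppos := pq_pos q m hm_meas hv y
  have key : ∀ θ', Real.log (gaussPdf (m θ') v y)
      ≤ gaussPdf (m θ') v y / pq q m v y - 1 + Real.log (pq q m v y) := by
    intro θ'
    have h := Real.log_le_sub_one_of_pos (div_pos (gaussPdf_pos hv (m θ') y) hppos)
    rw [Real.log_div (ne_of_gt (gaussPdf_pos hv _ _)) (ne_of_gt hppos)] at h
    linarith
  have heq : (fun θ' => Real.log (gaussPdf (m θ') v y)) = fun θ' =>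
      (Real.log (Real.sqrt (2 * Real.pi * v ^ 2))⁻¹ - (2 * v ^ 2)⁻¹ * y ^ 2)
        + ((2 * v ^ 2)⁻¹ * (2 * y)) * m θ' - (2 * v ^ 2)⁻¹ * (m θ') ^ 2 := by
    funext θ'
    rw [log_gaussPdf hv]
    have hv2 : (2 : ℝ) * v ^ 2 ≠ 0 := by positivity
    field_simp
    ring
  have hint_left : Integrable (fun θ' => Real.log (gaussPdf (m θ') v y)) q := by
    rw [heq]
    exact ((integrable_const _).add (hm1.const_mul _)).sub (hm2.const_mul _)
  have hint_right : Integrable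
      (fun θ' => gaussPdf (m θ') v y / pq q m v y - 1 + Real.log (pq q m v y)) q :=
    (((integrable_gauss_theta q m hm_meas hv y).div_const _).sub (integrable_const 1)).add
      (integrable_const _)
  have hmono := integral_mono hint_left hint_right key
  have hleft : ∫ θ', Real.log (gaussPdf (m θ') v y) ∂q
      = Real.log (Real.sqrt (2 * Real.pi * v ^ 2))⁻¹
        - (y ^ 2 - 2 * y * (∫ θ, m θ ∂q) + ∫ θ, (m θ) ^ 2 ∂q) / (2 * v ^ 2) := by
    have hI1 : Integrable (fun θ' =>
        (Real.log (Real.sqrt (2 * Real.pi * v ^ 2))⁻¹ - (2 * v ^ 2)⁻¹ * y ^ 2)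
          + ((2 * v ^ 2)⁻¹ * (2 * y)) * m θ') q := (integrable_const _).add (hm1.const_mul _)
    have hI2 : Integrable (fun θ' => (2 * v ^ 2)⁻¹ * (m θ') ^ 2) q := hm2.const_mul _
    rw [heq, integral_sub hI1 hI2,
      integral_add (integrable_const _) (hm1.const_mul _), integral_const,
      integral_const_mul, integral_const_mul]
    have hv2 : (2 : ℝ) * v ^ 2 ≠ 0 := by positivity
    simp only [measure_univ, ENNReal.toReal_one, smul_eq_mul, one_mul, probReal_univ]
    field_simp
    ring
  have hright : ∫ θ', (gaussPdf (m θ') v y / pq q m v y - 1 + Real.log (pq q m v y)) ∂q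
      = Real.log (pq q m v y) := by
    have hI3 : Integrable (fun θ' => gaussPdf (m θ') v y / pq q m v y - 1) q :=
      ((integrable_gauss_theta q m hm_meas hv y).div_const _).sub (integrable_const 1)
    rw [integral_add hI3 (integrable_const _),
      integral_sub ((integrable_gauss_theta q m hm_meas hv y).div_const _) (integrable_const 1),
      integral_div, integral_const, integral_const]
    have : (∫ θ', gaussPdf (m θ') v y ∂q) = pq q m v y := rfl
    rw [this]
    simp [div_self (ne_of_gt hppos)]
  rw [hleft, hright] at hmono
  exact hmono

lemma abs_log_pq_le (hm_meas : Measurable m) (hm : MemLp m 2 q) (hv : 0 < v) (y : ℝ) :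
    |Real.log (pq q m v y)|
      ≤ (2 * |Real.log (Real.sqrt (2 * Real.pi * v ^ 2))⁻¹|
          + ((∫ θ, m θ ∂q) ^ 2 + ∫ θ, (m θ) ^ 2 ∂q) / (2 * v ^ 2))
        + (1 / v ^ 2) * y ^ 2 := by
  set L := Real.log (Real.sqrt (2 * Real.pi * v ^ 2))⁻¹ with hL
  set M1 := ∫ θ, m θ ∂q
  set M2 := ∫ θ, (m θ) ^ 2 ∂q
  have hM2 : 0 ≤ M2 := integral_nonneg fun θ => sq_nonneg _
  have hub : Real.log (pq q m v y) ≤ L :=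
    Real.log_le_log (pq_pos q m hm_meas hv y) (pq_le q m hm_meas hv y)
  have hlb := log_pq_ge q m hm_meas hm hv y
  have hv2 : (0:ℝ) < v ^ 2 := by positivity
  have hdiv : (y ^ 2 - 2 * y * M1 + M2) / (2 * v ^ 2)
      ≤ (2 * y ^ 2 + M1 ^ 2 + M2) / (2 * v ^ 2) := by
    gcongr
    nlinarith [sq_nonneg (y + M1), sq_nonneg (y - M1)]
  have hsplit : (2 * y ^ 2 + M1 ^ 2 + M2) / (2 * v ^ 2)
      = (1 / v ^ 2) * y ^ 2 + (M1 ^ 2 + M2) / (2 * v ^ 2) := by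
    field_simp
    ring
  have h1 : 0 ≤ (M1 ^ 2 + M2) / (2 * v ^ 2) :=
    div_nonneg (by nlinarith [sq_nonneg M1]) (by positivity)
  have h2 : (0:ℝ) ≤ 1 / v ^ 2 * y ^ 2 := by positivity
  rw [abs_le]
  constructor
  · nlinarith [neg_abs_le L, le_abs_self L, abs_nonneg L]
  · nlinarith [le_abs_self L, abs_nonneg L]


lemma sub_le_mul_log_sub {a b : ℝ} (ha : 0 < a) (hb : 0 < b) :
    a - b ≤ a * (Real.log a - Real.log b) := by
  have h := Real.log_le_sub_one_of_pos (div_pos hb ha)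
  rw [Real.log_div (ne_of_gt hb) (ne_of_gt ha)] at h
  have h2 := mul_le_mul_of_nonneg_left h (le_of_lt ha)
  have h3 : a * (b / a - 1) = b - a := by field_simp
  nlinarith

lemma integrable_gauss_mul_log_pq (hm_meas : Measurable m) (hm : MemLp m 2 q) (hv : 0 < v)
    (a : ℝ) : Integrable (fun y => gaussPdf a v y * Real.log (pq q m v y)) := by
  set C := 2 * |Real.log (Real.sqrt (2 * Real.pi * v ^ 2))⁻¹|
      + ((∫ θ, m θ ∂q) ^ 2 + ∫ θ, (m θ) ^ 2 ∂q) / (2 * v ^ 2) with hC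
  have hbd : Integrable (fun y : ℝ => C * gaussPdf a v y
      + (1 / v ^ 2) * (gaussPdf a v y * (y - 0) ^ 2)) volume :=
    ((integrable_gaussPdf hv a).const_mul _).add ((integrable_gaussPdf_sq hv a 0).const_mul _)
  refine Integrable.mono' hbd ?_ ?_
  · exact ((gaussPdf_measurable a).mul
      ((measurable_pq q m hm_meas).log)).aestronglyMeasurable
  · filter_upwards with y
    rw [Real.norm_eq_abs, abs_mul, abs_of_pos (gaussPdf_pos hv a y), sub_zero]
    have h1 := abs_log_pq_le q m hm_meas hm hv y
    have hg := gaussPdf_pos hv a y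
    have h2 := mul_le_mul_of_nonneg_left h1 (le_of_lt hg)
    rw [← hC] at h2
    nlinarith

lemma integrable_prod_gauss_mul (hm_meas : Measurable m) (hm : MemLp m 2 q) (hv : 0 < v) :
    Integrable (fun z : Θ × ℝ => gaussPdf (m z.1) v z.2) (q.prod volume) := by
  have hm1 : Integrable m q := hm.integrable one_le_two
  have hsm : AEStronglyMeasurable (fun z : Θ × ℝ => gaussPdf (m z.1) v z.2) (q.prod volume) := by
    apply Measurable.aestronglyMeasurable
    unfold gaussPdf
    fun_prop
  rw [integrable_prod_iff hsm]
  constructor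
  · exact Filter.Eventually.of_forall fun θ => integrable_gaussPdf hv (m θ)
  · have heq : (fun θ => ∫ y, ‖gaussPdf (m θ) v y‖) = fun θ => (1:ℝ) := by
      funext θ
      rw [show (fun y => ‖gaussPdf (m θ) v y‖) = fun y => gaussPdf (m θ) v y from
        funext fun y => by rw [Real.norm_eq_abs, abs_of_pos (gaussPdf_pos hv _ _)]]
      exact integral_gaussPdf hv (m θ)
    rw [heq]
    exact integrable_const 1

lemma integrable_pq : (hm_meas : Measurable m) → (hm : MemLp m 2 q) → (hv : 0 < v) →
    Integrable (pq q m v) volume := fun hm_meas hm hv => by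
  have h := (integrable_prod_gauss_mul q m hm_meas hm hv).integral_prod_right
  exact h

lemma integral_pq_eq_one (hm_meas : Measurable m) (hm : MemLp m 2 q) (hv : 0 < v) :
    ∫ y, pq q m v y = 1 := by
  have hswap := integral_integral_swap (f := fun θ y => gaussPdf (m θ) v y)
    (integrable_prod_gauss_mul q m hm_meas hm hv)
  rw [show (fun y => pq q m v y) = fun y => ∫ θ, gaussPdf (m θ) v y ∂q from rfl, ← hswap]
  rw [integral_congr_ae (Filter.Eventually.of_forall fun θ => integral_gaussPdf hv (m θ))]
  simp

lemma integrable_prod_F2 (hm_meas : Measurable m) (hm : MemLp m 2 q) (hv : 0 < v) (θs : Θ) :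
    Integrable (fun z : Θ × ℝ => gaussPdf (m z.1) v z.2 *
      (Real.log (pq q m v z.2) - Real.log (gaussPdf (m θs) v z.2))) (q.prod volume) := by
  have hm1 : Integrable m q := hm.integrable one_le_two
  have hm2 : Integrable (fun θ => (m θ) ^ 2) q := hm.integrable_sq
  set c := (Real.sqrt (2 * Real.pi * v ^ 2))⁻¹ with hc
  set C := 2 * |Real.log c| + ((∫ θ, m θ ∂q) ^ 2 + ∫ θ, (m θ) ^ 2 ∂q) / (2 * v ^ 2) with hCdef
  have hmeasF2 : Measurable (fun z : Θ × ℝ => gaussPdf (m z.1) v z.2 *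
      (Real.log (pq q m v z.2) - Real.log (gaussPdf (m θs) v z.2))) := by
    have h1 : Measurable (fun z : Θ × ℝ => gaussPdf (m z.1) v z.2) := by
      unfold gaussPdf; fun_prop
    have h2 : Measurable (fun z : Θ × ℝ => Real.log (pq q m v z.2)) :=
      ((measurable_pq q m hm_meas).log).comp measurable_snd
    have h3 : Measurable (fun z : Θ × ℝ => Real.log (gaussPdf (m θs) v z.2)) :=
      ((gaussPdf_measurable (m θs)).log).comp measurable_snd
    exact h1.mul (h2.sub h3)
  rw [integrable_prod_iff hmeasF2.aestronglyMeasurable]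
  have hsec : ∀ θ : Θ, Integrable (fun y => gaussPdf (m θ) v y *
      (Real.log (pq q m v y) - Real.log (gaussPdf (m θs) v y))) volume := by
    intro θ
    refine ((integrable_gauss_mul_log_pq q m hm_meas hm hv (m θ)).sub
      (integrable_gaussPdf_mul_log_gaussPdf hv (m θ) (m θs))).congr
      (Filter.Eventually.of_forall fun y => (mul_sub _ _ _).symm)
  refine ⟨Filter.Eventually.of_forall hsec, ?_⟩
  -- bound on the section norms
  have hptB : ∀ (θ : Θ) (y : ℝ), ‖gaussPdf (m θ) v y *
      (Real.log (pq q m v y) - Real.log (gaussPdf (m θs) v y))‖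
      ≤ (C + |Real.log c|) * gaussPdf (m θ) v y
        + (1 / v ^ 2) * (gaussPdf (m θ) v y * (y - 0) ^ 2)
        + (2 * v ^ 2)⁻¹ * (gaussPdf (m θ) v y * (y - m θs) ^ 2) := by
    intro θ y
    rw [Real.norm_eq_abs, abs_mul, abs_of_pos (gaussPdf_pos hv _ _)]
    have h1 := abs_log_pq_le q m hm_meas hm hv y
    rw [← hc, ← hCdef] at h1
    have h2 : |Real.log (gaussPdf (m θs) v y)| ≤ |Real.log c| + (y - m θs) ^ 2 / (2 * v ^ 2) := by
      rw [log_gaussPdf hv, ← hc]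
      refine (abs_sub _ _).trans ?_
      gcongr
      rw [abs_of_nonneg (by positivity)]
    have habs2 : |Real.log (pq q m v y) - Real.log (gaussPdf (m θs) v y)|
        ≤ (C + 1 / v ^ 2 * y ^ 2) + (|Real.log c| + (y - m θs) ^ 2 / (2 * v ^ 2)) :=
      (abs_sub _ _).trans (add_le_add h1 h2)
    have h3 := mul_le_mul_of_nonneg_left habs2 (le_of_lt (gaussPdf_pos hv (m θ) y))
    refine h3.trans (le_of_eq ?_)
    have hv2 : (2:ℝ) * v ^ 2 ≠ 0 := by positivity
    field_simp
    ring
  have hBint : ∀ θ : Θ, Integrable (fun y : ℝ => (C + |Real.log c|) * gaussPdf (m θ) v y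
      + (1 / v ^ 2) * (gaussPdf (m θ) v y * (y - 0) ^ 2)
      + (2 * v ^ 2)⁻¹ * (gaussPdf (m θ) v y * (y - m θs) ^ 2)) volume := fun θ =>
    (((integrable_gaussPdf hv (m θ)).const_mul _).add
      ((integrable_gaussPdf_sq hv (m θ) 0).const_mul _)).add
      ((integrable_gaussPdf_sq hv (m θ) (m θs)).const_mul _)
  have hBval : ∀ θ : Θ, (∫ y : ℝ, ((C + |Real.log c|) * gaussPdf (m θ) v y
      + (1 / v ^ 2) * (gaussPdf (m θ) v y * (y - 0) ^ 2)
      + (2 * v ^ 2)⁻¹ * (gaussPdf (m θ) v y * (y - m θs) ^ 2)))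
      = (C + |Real.log c| + 3/2 + (m θs) ^ 2 / (2 * v ^ 2))
        + (-(m θs) / v ^ 2) * m θ + (3 / (2 * v ^ 2)) * (m θ) ^ 2 := by
    intro θ
    have hI1 : Integrable (fun y : ℝ => (C + |Real.log c|) * gaussPdf (m θ) v y
        + (1 / v ^ 2) * (gaussPdf (m θ) v y * (y - 0) ^ 2)) volume :=
      ((integrable_gaussPdf hv (m θ)).const_mul _).add
        ((integrable_gaussPdf_sq hv (m θ) 0).const_mul _)
    rw [integral_add hI1 ((integrable_gaussPdf_sq hv (m θ) (m θs)).const_mul _),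
      integral_add ((integrable_gaussPdf hv (m θ)).const_mul _)
        ((integrable_gaussPdf_sq hv (m θ) 0).const_mul _),
      integral_const_mul, integral_const_mul, integral_const_mul,
      integral_gaussPdf hv, integral_gaussPdf_sq hv, integral_gaussPdf_sq hv]
    have hv2 : v ^ 2 ≠ 0 := by positivity
    field_simp
    ring
  have hψint : Integrable (fun θ => (C + |Real.log c| + 3/2 + (m θs) ^ 2 / (2 * v ^ 2))
      + (-(m θs) / v ^ 2) * m θ + (3 / (2 * v ^ 2)) * (m θ) ^ 2) q :=
    ((integrable_const _).add (hm1.const_mul _)).add (hm2.const_mul _)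
  have hSM : StronglyMeasurable (fun θ => ∫ y, ‖gaussPdf (m θ) v y *
      (Real.log (pq q m v y) - Real.log (gaussPdf (m θs) v y))‖) :=
    (hmeasF2.stronglyMeasurable.norm).integral_prod_right'
  refine Integrable.mono' hψint hSM.aestronglyMeasurable ?_
  filter_upwards with θ
  have hnn : 0 ≤ ∫ y, ‖gaussPdf (m θ) v y *
      (Real.log (pq q m v y) - Real.log (gaussPdf (m θs) v y))‖ :=
    integral_nonneg fun y => norm_nonneg _
  rw [Real.norm_eq_abs, abs_of_nonneg hnn]
  calc ∫ y, ‖gaussPdf (m θ) v y *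
        (Real.log (pq q m v y) - Real.log (gaussPdf (m θs) v y))‖
      ≤ ∫ y : ℝ, ((C + |Real.log c|) * gaussPdf (m θ) v y
        + (1 / v ^ 2) * (gaussPdf (m θ) v y * (y - 0) ^ 2)
        + (2 * v ^ 2)⁻¹ * (gaussPdf (m θ) v y * (y - m θs) ^ 2)) :=
      integral_mono ((hsec θ).norm) (hBint θ) (hptB θ)
    _ = _ := hBval θ

lemma R_nonneg (hm_meas : Measurable m) (hm : MemLp m 2 q) (hv : 0 < v) (θs : Θ) :
    0 ≤ ∫ θ, (∫ y, gaussPdf (m θ) v y *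
      (Real.log (pq q m v y) - Real.log (gaussPdf (m θs) v y))) ∂q := by
  have hF2 := integrable_prod_F2 q m hm_meas hm hv θs
  have hswap := integral_integral_swap (f := fun θ y => gaussPdf (m θ) v y *
    (Real.log (pq q m v y) - Real.log (gaussPdf (m θs) v y))) hF2
  rw [hswap]
  have hinner : ∀ y : ℝ, (∫ θ, gaussPdf (m θ) v y *
      (Real.log (pq q m v y) - Real.log (gaussPdf (m θs) v y)) ∂q)
      = pq q m v y * (Real.log (pq q m v y) - Real.log (gaussPdf (m θs) v y)) := by
    intro y
    rw [integral_mul_const]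
    rfl
  rw [integral_congr_ae (Filter.Eventually.of_forall hinner)]
  have hint1 : Integrable (fun y => pq q m v y *
      (Real.log (pq q m v y) - Real.log (gaussPdf (m θs) v y))) volume := by
    have h := hF2.integral_prod_right
    exact h.congr (Filter.Eventually.of_forall hinner)
  have hint0 : Integrable (fun y => pq q m v y - gaussPdf (m θs) v y) volume :=
    (integrable_pq q m hm_meas hm hv).sub (integrable_gaussPdf hv (m θs))
  have hmono : ∫ y, (pq q m v y - gaussPdf (m θs) v y)
      ≤ ∫ y, pq q m v y * (Real.log (pq q m v y) - Real.log (gaussPdf (m θs) v y)) :=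
    integral_mono hint0 hint1 fun y =>
      sub_le_mul_log_sub (pq_pos q m hm_meas hv y) (gaussPdf_pos hv (m θs) y)
  have hzero : ∫ y, (pq q m v y - gaussPdf (m θs) v y) = 0 := by
    rw [integral_sub (integrable_pq q m hm_meas hm hv) (integrable_gaussPdf hv (m θs)),
      integral_pq_eq_one q m hm_meas hm hv, integral_gaussPdf hv]
    ring
  linarith

lemma lemA (hm_meas : Measurable m) (hm : MemLp m 2 q) (hv : 0 < v) (θs : Θ) :
    ∫ y : ℝ, gaussPdf (m θs) v y * Real.log (gaussPdf (m θs) v y / pq q m v y)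
      ≤ (∫ θ, (m θ - m θs) ^ 2 ∂q) / (2 * v ^ 2) := by
  have hm1 : Integrable m q := hm.integrable one_le_two
  have hm2 : Integrable (fun θ => (m θ) ^ 2) q := hm.integrable_sq
  have hv2 : v ^ 2 ≠ 0 := by positivity
  set c := (Real.sqrt (2 * Real.pi * v ^ 2))⁻¹ with hc
  set M1 := ∫ θ, m θ ∂q with hM1
  set M2 := ∫ θ, (m θ) ^ 2 ∂q with hM2
  have hsplit : (fun y : ℝ => gaussPdf (m θs) v y *
      Real.log (gaussPdf (m θs) v y / pq q m v y)) =
      fun y : ℝ => gaussPdf (m θs) v y * Real.log (gaussPdf (m θs) v y)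
        - gaussPdf (m θs) v y * Real.log (pq q m v y) := by
    funext y
    rw [Real.log_div (ne_of_gt (gaussPdf_pos hv _ _)) (ne_of_gt (pq_pos q m hm_meas hv y))]
    ring
  rw [hsplit, integral_sub (integrable_gaussPdf_mul_log_gaussPdf hv (m θs) (m θs))
    (integrable_gauss_mul_log_pq q m hm_meas hm hv (m θs))]
  -- lower bound for ∫ g* log pq
  have hGLeq : (fun y : ℝ => gaussPdf (m θs) v y *
      (Real.log c - (y ^ 2 - 2 * y * M1 + M2) / (2 * v ^ 2))) =
      fun y : ℝ => (Real.log c - (M2 - M1 ^ 2) / (2 * v ^ 2)) * gaussPdf (m θs) v y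
        - (2 * v ^ 2)⁻¹ * (gaussPdf (m θs) v y * (y - M1) ^ 2) := by
    funext y
    field_simp
    ring
  have hGL_int : Integrable (fun y : ℝ => gaussPdf (m θs) v y *
      (Real.log c - (y ^ 2 - 2 * y * M1 + M2) / (2 * v ^ 2))) volume := by
    rw [hGLeq]
    exact ((integrable_gaussPdf hv (m θs)).const_mul _).sub
      ((integrable_gaussPdf_sq hv (m θs) M1).const_mul _)
  have hGL_val : ∫ y : ℝ, gaussPdf (m θs) v y *
      (Real.log c - (y ^ 2 - 2 * y * M1 + M2) / (2 * v ^ 2))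
      = (Real.log c - (M2 - M1 ^ 2) / (2 * v ^ 2)) - (2 * v ^ 2)⁻¹ * (v ^ 2 + (m θs - M1) ^ 2) := by
    rw [hGLeq, integral_sub ((integrable_gaussPdf hv (m θs)).const_mul _)
        ((integrable_gaussPdf_sq hv (m θs) M1).const_mul _),
      integral_const_mul, integral_const_mul, integral_gaussPdf hv, integral_gaussPdf_sq hv]
    ring
  have hmono : ∫ y : ℝ, gaussPdf (m θs) v y *
      (Real.log c - (y ^ 2 - 2 * y * M1 + M2) / (2 * v ^ 2))
      ≤ ∫ y : ℝ, gaussPdf (m θs) v y * Real.log (pq q m v y) :=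
    integral_mono hGL_int (integrable_gauss_mul_log_pq q m hm_meas hm hv (m θs)) fun y =>
      mul_le_mul_of_nonneg_left (log_pq_ge q m hm_meas hm hv y)
        (le_of_lt (gaussPdf_pos hv _ _))
  have hK : ∫ θ, (m θ - m θs) ^ 2 ∂q = M2 - 2 * m θs * M1 + (m θs) ^ 2 := by
    have heq : (fun θ => (m θ - m θs) ^ 2) =
        fun θ => ((m θ) ^ 2 - (2 * m θs) * m θ) + (m θs) ^ 2 := by
      funext θ; ring
    have hIa : Integrable (fun θ => (m θ) ^ 2 - (2 * m θs) * m θ) q :=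
      hm2.sub (hm1.const_mul _)
    rw [heq, integral_add hIa (integrable_const _), integral_sub hm2 (hm1.const_mul _),
      integral_const_mul, integral_const]
    simp only [measure_univ, ENNReal.toReal_one, smul_eq_mul, one_mul, probReal_univ]
    rfl
  rw [integral_gaussPdf_mul_log_gaussPdf hv, hK, ← hc]
  have hfinal : (Real.log c - (v ^ 2 + (m θs - m θs) ^ 2) / (2 * v ^ 2))
      - ((Real.log c - (M2 - M1 ^ 2) / (2 * v ^ 2))
        - (2 * v ^ 2)⁻¹ * (v ^ 2 + (m θs - M1) ^ 2))
      = (M2 - 2 * m θs * M1 + (m θs) ^ 2) / (2 * v ^ 2) := by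
    field_simp
    ring
  linarith [hmono, hGL_val, hfinal]

lemma lemB (hm_meas : Measurable m) (hm : MemLp m 2 q) (hv : 0 < v) (θs : Θ) :
    ∫ θ, (∫ y : ℝ, gaussPdf (m θ) v y *
        Real.log (gaussPdf (m θ) v y / pq q m v y)) ∂q
      ≤ (∫ θ, (m θ - m θs) ^ 2 ∂q) / (2 * v ^ 2) := by
  have hm1 : Integrable m q := hm.integrable one_le_two
  have hm2 : Integrable (fun θ => (m θ) ^ 2) q := hm.integrable_sq
  have hv2 : v ^ 2 ≠ 0 := by positivity
  have hθ : ∀ θ : Θ, (∫ y : ℝ, gaussPdf (m θ) v y *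
      Real.log (gaussPdf (m θ) v y / pq q m v y))
      = (m θ - m θs) ^ 2 / (2 * v ^ 2) - ∫ y : ℝ, gaussPdf (m θ) v y *
          (Real.log (pq q m v y) - Real.log (gaussPdf (m θs) v y)) := by
    intro θ
    have hsplit : (fun y : ℝ => gaussPdf (m θ) v y *
        Real.log (gaussPdf (m θ) v y / pq q m v y)) =
        fun y : ℝ => gaussPdf (m θ) v y * Real.log (gaussPdf (m θ) v y)
          - gaussPdf (m θ) v y * Real.log (pq q m v y) := by
      funext y
      rw [Real.log_div (ne_of_gt (gaussPdf_pos hv _ _)) (ne_of_gt (pq_pos q m hm_meas hv y))]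
      ring
    have hsplit2 : (fun y : ℝ => gaussPdf (m θ) v y *
        (Real.log (pq q m v y) - Real.log (gaussPdf (m θs) v y))) =
        fun y : ℝ => gaussPdf (m θ) v y * Real.log (pq q m v y)
          - gaussPdf (m θ) v y * Real.log (gaussPdf (m θs) v y) := by
      funext y
      ring
    rw [hsplit, hsplit2, integral_sub (integrable_gaussPdf_mul_log_gaussPdf hv (m θ) (m θ))
        (integrable_gauss_mul_log_pq q m hm_meas hm hv (m θ)),
      integral_sub (integrable_gauss_mul_log_pq q m hm_meas hm hv (m θ))
        (integrable_gaussPdf_mul_log_gaussPdf hv (m θ) (m θs)),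
      integral_gaussPdf_mul_log_gaussPdf hv, integral_gaussPdf_mul_log_gaussPdf hv]
    field_simp
    ring
  rw [integral_congr_ae (Filter.Eventually.of_forall hθ)]
  have hφint : Integrable (fun θ => (m θ - m θs) ^ 2 / (2 * v ^ 2)) q := by
    have h0 : Integrable (fun θ => (m θ - m θs) ^ 2) q := by
      refine ((hm2.sub (hm1.const_mul (2 * m θs))).add
        (integrable_const ((m θs) ^ 2))).congr (Filter.Eventually.of_forall fun θ => by
          simp only [Pi.add_apply, Pi.sub_apply]; ring)
    exact h0.div_const _
  have hRint : Integrable (fun θ => ∫ y : ℝ, gaussPdf (m θ) v y *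
      (Real.log (pq q m v y) - Real.log (gaussPdf (m θs) v y))) q := by
    have h := (integrable_prod_F2 q m hm_meas hm hv θs).integral_prod_left
    exact h
  rw [integral_sub hφint hRint, integral_div]
  have hR := R_nonneg q m hm_meas hm hv θs
  linarith

end main

/-- Specialization of Theorem 3 to the Gaussian likelihood (Appendix
Eq. (eq_gaussian_trans), conditional version).  For `p_θ = N(m θ, v²)` with
posterior predictive density `p^q y = ∫ p_θ y dq` and well-specified model
`p_{θ*}` with `m* = m θ*`:
`KL(p_{θ*}‖p^q) + ∫ KL(p_θ‖p^q) dq ≤ (1/v²) ∫ (m θ − m*)² dq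
  = 2 ∫ KL(p_{θ*}‖p_θ) dq`,
i.e., the prediction excess risk plus the Bayesian excess risk (mutual
information) for the log loss is at most twice the excess risk `ER^log`.
The inner integrals are with respect to Lebesgue measure on `ℝ`. -/
theorem thm3_gaussian_specialization
    {Θ : Type*} [MeasurableSpace Θ] (q : Measure Θ) [IsProbabilityMeasure q]
    (m : Θ → ℝ) (hm_meas : Measurable m) (hm : MemLp m 2 q)
    (v : ℝ) (hv : 0 < v) (θs : Θ) :
    ((∫ y : ℝ, gaussPdf (m θs) v y *
        Real.log (gaussPdf (m θs) v y / ∫ θ', gaussPdf (m θ') v y ∂q))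
      + ∫ θ, (∫ y : ℝ, gaussPdf (m θ) v y *
          Real.log (gaussPdf (m θ) v y / ∫ θ', gaussPdf (m θ') v y ∂q)) ∂q
      ≤ (1 / v ^ 2) * ∫ θ, (m θ - m θs) ^ 2 ∂q)
    ∧ (1 / v ^ 2) * (∫ θ, (m θ - m θs) ^ 2 ∂q)
      = 2 * ∫ θ, (∫ y : ℝ, gaussPdf (m θs) v y *
          Real.log (gaussPdf (m θs) v y / gaussPdf (m θ) v y)) ∂q := by
  have hv2 : v ^ 2 ≠ 0 := by positivity
  constructor
  · show (∫ y : ℝ, gaussPdf (m θs) v y *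
        Real.log (gaussPdf (m θs) v y / pq q m v y))
      + ∫ θ, (∫ y : ℝ, gaussPdf (m θ) v y *
          Real.log (gaussPdf (m θ) v y / pq q m v y)) ∂q
      ≤ (1 / v ^ 2) * ∫ θ, (m θ - m θs) ^ 2 ∂q
    have hA := lemA q m hm_meas hm hv θs
    have hB := lemB q m hm_meas hm hv θs
    have hhalf : (1 / v ^ 2) * ∫ θ, (m θ - m θs) ^ 2 ∂q
        = (∫ θ, (m θ - m θs) ^ 2 ∂q) / (2 * v ^ 2)
          + (∫ θ, (m θ - m θs) ^ 2 ∂q) / (2 * v ^ 2) := by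
      field_simp
      ring
    linarith
  · have hKL : ∀ θ : Θ, (∫ y : ℝ, gaussPdf (m θs) v y *
        Real.log (gaussPdf (m θs) v y / gaussPdf (m θ) v y))
        = (m θs - m θ) ^ 2 / (2 * v ^ 2) := fun θ => integral_KL hv (m θs) (m θ)
    rw [integral_congr_ae (Filter.Eventually.of_forall hKL), integral_div]
    have hsq : (fun θ => (m θs - m θ) ^ 2) = fun θ => (m θ - m θs) ^ 2 :=
      funext fun θ => by ring
    rw [hsq]
    field_simp
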